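/- Under the FIFO property, the forward DP recursion J̃_{l+1}(y) = min_{x : (x,y)∈E} [ g((x,y), J̃_l(x)) + J̃_l(x) ] computed with only the minimal arrival time at each node at each stage yields the same value as the full recursion over all (node, arrival-time) pairs: for every node y and stage l, the minimum over all paths of length l from the origin of the arrival time at y equals J̃_l(y). -/

import Mathlib

/-- Arrival time along a path `x` starting at time `t0`, with time-dependent edge
travel times `g`. -/
noncomputable def arrival {V : Type*} (g : V × V → ℝ → ℝ) (x : ℕ → V) (t0 : ℝ) : ℕ → ℝ
  | 0 => t0
  | l + 1 => arrival g x t0 l + g (x l, x (l + 1)) (arrival g x t0 l)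

/-- One forward-DP step on extended reals: from arrival value `s` at the tail of edge
`e`, the arrival value `s + g(e, s)` at its head (`⊤` if `s` is not a real number). -/
noncomputable def stepTime {V : Type*} (g : V × V → ℝ → ℝ) (e : V × V) (s : EReal) : EReal :=
  if s = ⊤ ∨ s = ⊥ then ⊤ else ((s.toReal + g e s.toReal : ℝ) : EReal)

lemma stepTime_coe {V : Type*} (g : V × V → ℝ → ℝ) (e : V × V) (r : ℝ) :
    stepTime g e (r : EReal) = ((r + g e r : ℝ) : EReal) := by
  simp [stepTime]

lemma arrival_congr {V : Type*} (g : V × V → ℝ → ℝ) (x y : ℕ → V) (t0 : ℝ) :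
    ∀ l : ℕ, (∀ m ≤ l, x m = y m) → arrival g x t0 l = arrival g y t0 l := by
  intro l
  induction l with
  | zero => intro _; rfl
  | succ l ih =>
    intro h
    have h' : ∀ m ≤ l, x m = y m := fun m hm => h m (le_trans hm (Nat.le_succ l))
    show arrival g x t0 l + g (x l, x (l + 1)) (arrival g x t0 l)
        = arrival g y t0 l + g (y l, y (l + 1)) (arrival g y t0 l)
    rw [ih h', h l (Nat.le_succ l), h (l + 1) le_rfl]

lemma sInf_iUnion' {α ι : Type*} [CompleteLattice α] (s : ι → Set α) :
    sInf (⋃ i, s i) = ⨅ i, sInf (s i) := by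
  apply le_antisymm
  · exact le_iInf fun i => sInf_le_sInf (Set.subset_iUnion s i)
  · apply le_sInf
    rintro a ⟨t, ⟨i, rfl⟩, ha⟩
    exact le_trans (iInf_le _ i) (sInf_le ha)

/-- The set of arrival times of walks of length `l` from `o` to `y`. -/
def Sset {V : Type*} (E : V → V → Prop) (g : V × V → ℝ → ℝ) (o : V) (t0 : ℝ)
    (l : ℕ) (y : V) : Set EReal :=
  {s : EReal | ∃ x : ℕ → V, x 0 = o ∧ x l = y ∧
    (∀ m < l, E (x m) (x (m + 1))) ∧ s = ((arrival g x t0 l : ℝ) : EReal)}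

lemma Sset_finite {V : Type*} [Fintype V] (E : V → V → Prop) (g : V × V → ℝ → ℝ)
    (o : V) (t0 : ℝ) (l : ℕ) (y : V) : (Sset E g o t0 l y).Finite := by
  apply Set.Finite.subset (Set.finite_range
    (fun f : Fin (l + 1) → V =>
      ((arrival g (fun m => if h : m < l + 1 then f ⟨m, h⟩ else o) t0 l : ℝ) : EReal)))
  rintro s ⟨x, hx0, hxl, hE, rfl⟩
  refine ⟨fun i => x i, ?_⟩
  have : arrival g (fun m => if h : m < l + 1 then x m else o) t0 l
      = arrival g x t0 l := by
    apply arrival_congr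
    intro m hm
    simp [Nat.lt_succ_of_le hm]
  exact congrArg (fun r : ℝ => (r : EReal)) this

/-- Under FIFO, the forward DP recursion keeping only the minimal arrival time at each
node at each stage computes exactly the minimum arrival time over all walks of that
length from the origin. -/
theorem forward_dp_with_min_arrival_is_exact
    {V : Type*} [Fintype V] [DecidableEq V] (E : V → V → Prop) (g : V × V → ℝ → ℝ)
    (hgpos : ∀ (e : V × V) (t : ℝ), 0 < g e t)
    (hFIFO : ∀ (e : V × V) (t t' : ℝ), t < t' → t + g e t < t' + g e t')
    (o : V) (t0 : ℝ) (J : ℕ → V → EReal)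
    (hJ0 : ∀ v : V, J 0 v = if v = o then (t0 : EReal) else ⊤)
    (hJ : ∀ (l : ℕ) (y : V), J (l + 1) y =
      ⨅ x : {x : V // E (x : V) y}, stepTime g ((x : V), y) (J l (x : V))) :
    ∀ (l : ℕ) (y : V),
      J l y = sInf {s : EReal | ∃ x : ℕ → V, x 0 = o ∧ x l = y ∧
        (∀ m < l, E (x m) (x (m + 1))) ∧ s = ((arrival g x t0 l : ℝ) : EReal)} := by
  have hmono : ∀ (e : V × V) (t t' : ℝ), t ≤ t' → t + g e t ≤ t' + g e t' := by
    intro e t t' h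
    rcases eq_or_lt_of_le h with rfl | h
    · exact le_rfl
    · exact le_of_lt (hFIFO e t t' h)
  intro l
  induction l with
  | zero =>
    intro y
    rw [hJ0 y]
    by_cases hy : y = o
    · have hset : Sset E g o t0 0 y = {(t0 : EReal)} := by
        ext s
        constructor
        · rintro ⟨x, hx0, _, _, rfl⟩
          simp [arrival]
        · rintro rfl
          exact ⟨fun _ => o, rfl, hy.symm, fun m hm => absurd hm (Nat.not_lt_zero m), rfl⟩
      show (if y = o then (t0 : EReal) else ⊤) = sInf (Sset E g o t0 0 y)
      rw [hset, sInf_singleton, if_pos hy]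
    · have hset : Sset E g o t0 0 y = ∅ := by
        ext s
        simp only [Sset, Set.mem_setOf_eq, Set.mem_empty_iff_false, iff_false]
        rintro ⟨x, hx0, hxl, _, _⟩
        exact hy (hxl ▸ hx0 ▸ rfl)
      show (if y = o then (t0 : EReal) else ⊤) = sInf (Sset E g o t0 0 y)
      rw [hset, sInf_empty, if_neg hy]
  | succ l ih =>
    intro y
    -- decomposition of the set of walks of length l+1
    have hdecomp : Sset E g o t0 (l + 1) y
        = ⋃ x : {x : V // E (x : V) y}, stepTime g ((x : V), y) '' Sset E g o t0 l (x : V) := by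
      ext s
      constructor
      · rintro ⟨w, hw0, hwl, hE, rfl⟩
        have hEly : E (w l) y := by
          have := hE l (Nat.lt_succ_self l)
          rwa [hwl] at this
        refine Set.mem_iUnion.2 ⟨⟨w l, hEly⟩, ((arrival g w t0 l : ℝ) : EReal),
          ⟨w, hw0, rfl, fun m hm => hE m (Nat.lt_succ_of_lt hm), rfl⟩, ?_⟩
        rw [stepTime_coe]
        show ((arrival g w t0 l + g (w l, y) (arrival g w t0 l) : ℝ) : EReal)
          = ((arrival g w t0 (l + 1) : ℝ) : EReal)
        show _ = ((arrival g w t0 l + g (w l, w (l + 1)) (arrival g w t0 l) : ℝ) : EReal)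
        rw [hwl]
      · intro hs
        obtain ⟨⟨x, hxy⟩, t, ⟨w, hw0, hwl, hE, rfl⟩, rfl⟩ := Set.mem_iUnion.1 hs
        set w' : ℕ → V := fun m => if m < l + 1 then w m else y with hw'
        have hagree : ∀ m ≤ l, w' m = w m := by
          intro m hm; simp [hw', Nat.lt_succ_of_le hm, Nat.not_lt.mpr hm]
        have harr : arrival g w' t0 l = arrival g w t0 l := arrival_congr g w' w t0 l hagree
        have hw'l : w' l = x := by rw [hagree l le_rfl, hwl]
        have hw'l1 : w' (l + 1) = y := by simp [hw']
        refine ⟨w', by rw [hagree 0 (Nat.zero_le l), hw0], hw'l1, ?_, ?_⟩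
        · intro m hm
          rcases Nat.lt_succ_iff_lt_or_eq.1 hm with hm' | rfl
          · rw [hagree m (le_of_lt hm'), hagree (m + 1) hm']
            exact hE m hm'
          · rw [hw'l, hw'l1]; exact hxy
        · rw [stepTime_coe]
          symm
          show ((arrival g w' t0 l + g (w' l, w' (l + 1)) (arrival g w' t0 l) : ℝ) : EReal) = _
          rw [harr, hw'l, hw'l1]
    -- sInf commutes with stepTime on each finite set
    have hstep : ∀ x : {x : V // E (x : V) y},
        sInf (stepTime g ((x : V), y) '' Sset E g o t0 l (x : V))
          = stepTime g ((x : V), y) (sInf (Sset E g o t0 l (x : V))) := by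
      intro x
      set S := Sset E g o t0 l (x : V) with hS
      rcases Set.eq_empty_or_nonempty S with hSe | hSn
      · rw [hSe]
        simp [stepTime, sInf_empty]
      · have hfin : S.Finite := Sset_finite E g o t0 l (x : V)
        have hmem : sInf S ∈ S := hSn.csInf_mem hfin
        obtain ⟨w, hw0, hwl, hE, hval⟩ := hmem
        apply le_antisymm
        · exact sInf_le ⟨sInf S, hSn.csInf_mem hfin, rfl⟩
        · apply le_sInf
          rintro a ⟨t, htS, rfl⟩
          obtain ⟨w', _, _, _, rfl⟩ := htS
          rw [hval, stepTime_coe, stepTime_coe]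
          have hle : arrival g w t0 l ≤ arrival g w' t0 l := by
            have := sInf_le (s := S) ⟨w', ‹_›, ‹_›, ‹_›, rfl⟩
            rw [hval] at this
            exact_mod_cast this
          exact_mod_cast hmono ((x : V), y) _ _ hle
    show J (l + 1) y = sInf (Sset E g o t0 (l + 1) y)
    rw [hJ l y, hdecomp, sInf_iUnion']
    apply iInf_congr
    intro x
    rw [hstep x, ih (x : V)]
    rfl
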